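/- Let c be a natural number, let w be a Gauss word of length 2c, and let j, j' : Fin (2c) be positions such that step_j(x) = −step_{j'}(x) for every assignment x, where step_b(x) = d_{b+1}(x) − d_b(x) (indices mod 2c). Then w j = w j', i.e., j and j' are the two positions of the same letter. Together with the fact that same-letter columns sum to zero, this shows that the partition of the 2c columns of the step matrix into c pairs of columns summing to zero exists and is unique, and it coincides with the pairing of positions given by the letters of w. -/

import Mathlib

/-! Moving the base from `b` to `b + 1` changes only the status of the letter `w b`: its position
`b` goes from being met first to being met last, while the order of the two positions of any other
letter is unchanged. Hence `step_b(x) = -1` if `b` is passed under and `+1` otherwise. If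
`w j ≠ w j'`, the two letters can be set independently so that `j` and `j'` are both passed under,
and then `step_j(x) = step_{j'}(x) = -1`. -/

namespace Warping

/-- A Gauss word of length `2c`: every letter occurs at exactly two positions. -/
def IsGaussWord (c : ℕ) (w : Fin (2*c) → Fin c) : Prop :=
  ∀ i : Fin c, (Finset.univ.filter (fun j => w j = i)).card = 2

/-- The cyclic successor of an index. -/
def next {n : ℕ} (b : Fin n) : Fin n :=
  ⟨((b : ℕ) + 1) % n, Nat.mod_lt _ (Nat.lt_of_le_of_lt (Nat.zero_le _) b.isLt)⟩

/-- `j` is the first (smaller) of the two positions of its letter. -/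
def isFirst (c : ℕ) (w : Fin (2*c) → Fin c) (j : Fin (2*c)) : Prop :=
  ∀ j' : Fin (2*c), w j' = w j → j ≤ j'

/-- Under the assignment `x`, position `j` is passed under. -/
def passedUnder (c : ℕ) (w : Fin (2*c) → Fin c) (x : Fin c → Bool) (j : Fin (2*c)) : Prop :=
  (x (w j) = true) ↔ isFirst c w j

/-- Time at which position `j` is met in the cyclic traversal starting at base `b`. -/
def time (c : ℕ) (b j : Fin (2*c)) : ℕ := ((j : ℕ) + 2*c - (b : ℕ)) % (2*c)

/-- The letter `i` is a warping crossing for assignment `x` and base `b`: the position of `i`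
met earlier in the cyclic traversal starting at `b` is passed under. -/
def IsWarpingCrossing (c : ℕ) (w : Fin (2*c) → Fin c) (x : Fin c → Bool)
    (b : Fin (2*c)) (i : Fin c) : Prop :=
  ∃ j : Fin (2*c), w j = i ∧ (∀ j' : Fin (2*c), w j' = i → time c b j ≤ time c b j') ∧
    passedUnder c w x j

open scoped Classical in
/-- The warping degree of the assignment `x` with base point `b`. -/
noncomputable def warpingDegree (c : ℕ) (w : Fin (2*c) → Fin c) (x : Fin c → Bool)
    (b : Fin (2*c)) : ℕ :=
  (Finset.univ.filter (fun i => IsWarpingCrossing c w x b i)).card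

/-- The step `d_{b+1}(x) - d_b(x)` of the warping degree sequence. -/
noncomputable def step (c : ℕ) (w : Fin (2*c) → Fin c) (x : Fin c → Bool) (b : Fin (2*c)) : ℤ :=
  (warpingDegree c w x (next b) : ℤ) - (warpingDegree c w x b : ℤ)

open scoped Classical

lemma _root_.Finset.card_filter_sub_card_filter_of_forall_ne {α : Type*} [Fintype α]
    (p q : α → Prop) (a : α) (h : ∀ i ≠ a, p i ↔ q i) :
    ((Finset.univ.filter p).card : ℤ) - (Finset.univ.filter q).card =
      (if p a then 1 else 0) - (if q a then 1 else 0) := by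
  rw [Finset.card_filter, Finset.card_filter]
  push_cast
  rw [← Finset.sum_sub_distrib,
    Finset.sum_eq_single a (fun i _ hi => by simp [h i hi]) (by simp)]

variable {c : ℕ} {w : Fin (2*c) → Fin c}

lemma time_eq_ite (b j : Fin (2*c)) :
    time c b j = if (b : ℕ) ≤ j then (j : ℕ) - b else (j : ℕ) + 2*c - b := by
  have := j.isLt
  unfold time
  split_ifs with hle
  · rw [show (j : ℕ) + 2*c - b = (j - b) + 2*c by omega, Nat.add_mod_right,
      Nat.mod_eq_of_lt (by omega)]
  · exact Nat.mod_eq_of_lt (by omega)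

lemma val_next_eq_ite (b : Fin (2*c)) :
    ((next b : Fin (2*c)) : ℕ) = if (b : ℕ) + 1 = 2*c then 0 else (b : ℕ) + 1 := by
  have := b.isLt
  show ((b : ℕ) + 1) % (2*c) = _
  split_ifs with h
  · rw [h, Nat.mod_self]
  · exact Nat.mod_eq_of_lt (by omega)

lemma time_injective (b : Fin (2*c)) : Function.Injective (time c b) := by
  intro j j' h
  have := j.isLt
  have := j'.isLt
  rw [time_eq_ite, time_eq_ite] at h
  ext
  split_ifs at h <;> omega

lemma time_self (b : Fin (2*c)) : time c b b = 0 := by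
  simp [time_eq_ite]

lemma time_lt (b j : Fin (2*c)) : time c b j < 2*c := by
  have := b.isLt
  have := j.isLt
  rw [time_eq_ite]
  split_ifs <;> omega

lemma time_next_self (b : Fin (2*c)) : time c (next b) b = 2*c - 1 := by
  have := b.isLt
  rw [time_eq_ite, val_next_eq_ite]
  split_ifs <;> omega

lemma time_next_add_one {b j : Fin (2*c)} (hj : j ≠ b) : time c (next b) j + 1 = time c b j := by
  have := b.isLt
  have := j.isLt
  have := Fin.val_ne_of_ne hj
  rw [time_eq_ite, time_eq_ite, val_next_eq_ite]
  split_ifs <;> omega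

lemma IsGaussWord.exists_positions (hw : IsGaussWord c w) (i : Fin c) :
    ∃ a a', a ≠ a' ∧ ∀ k, w k = i ↔ k = a ∨ k = a' := by
  obtain ⟨a, a', hne, hs⟩ := Finset.card_eq_two.mp (hw i)
  exact ⟨a, a', hne, fun k => by simpa using Finset.ext_iff.mp hs k⟩

lemma IsGaussWord.exists_partner (hw : IsGaussWord c w) (j : Fin (2*c)) :
    ∃ j₂, j ≠ j₂ ∧ ∀ k, w k = w j ↔ k = j ∨ k = j₂ := by
  obtain ⟨a, a', hne, hpos⟩ := hw.exists_positions (w j)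
  rcases (hpos j).mp rfl with rfl | rfl
  · exact ⟨a', hne, hpos⟩
  · exact ⟨a, hne.symm, fun k => (hpos k).trans or_comm⟩

lemma isFirst_iff_le {j j₂ : Fin (2*c)} (hpos : ∀ k, w k = w j ↔ k = j ∨ k = j₂) :
    isFirst c w j ↔ j ≤ j₂ := by
  refine ⟨fun h => h j₂ ((hpos j₂).mpr (Or.inr rfl)), fun hle k hk => ?_⟩
  rcases (hpos k).mp hk with rfl | rfl
  exacts [le_rfl, hle]

lemma passedUnder_partner_iff (x : Fin c → Bool) {j j₂ : Fin (2*c)} (hne : j ≠ j₂)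
    (hpos : ∀ k, w k = w j ↔ k = j ∨ k = j₂) :
    passedUnder c w x j₂ ↔ ¬ passedUnder c w x j := by
  have hw₂ : w j₂ = w j := (hpos j₂).mpr (Or.inr rfl)
  have hpos₂ : ∀ k, w k = w j₂ ↔ k = j₂ ∨ k = j :=
    fun k => hw₂ ▸ (hpos k).trans or_comm
  have hle : j₂ ≤ j ↔ ¬ j ≤ j₂ :=
    ⟨fun h h' => hne (le_antisymm h' h), fun h => (not_le.mp h).le⟩
  rw [passedUnder, passedUnder, isFirst_iff_le hpos, isFirst_iff_le hpos₂, hw₂, hle]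
  tauto

lemma isWarpingCrossing_iff_of_time_lt (x : Fin c → Bool) {b : Fin (2*c)} {i : Fin c}
    {a a' : Fin (2*c)} (hpos : ∀ k, w k = i ↔ k = a ∨ k = a')
    (hlt : time c b a < time c b a') :
    IsWarpingCrossing c w x b i ↔ passedUnder c w x a := by
  refine ⟨fun ⟨j, hj, hmin, hu⟩ => ?_,
    fun hu => ⟨a, (hpos a).mpr (Or.inl rfl), fun k hk => ?_, hu⟩⟩
  · rcases (hpos j).mp hj with rfl | rfl
    · exact hu
    · exact absurd (hmin a ((hpos a).mpr (Or.inl rfl))) (not_le.mpr hlt)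
  · rcases (hpos k).mp hk with rfl | rfl
    exacts [le_rfl, hlt.le]

lemma isWarpingCrossing_self_iff (hw : IsGaussWord c w) (x : Fin c → Bool) (b : Fin (2*c)) :
    IsWarpingCrossing c w x b (w b) ↔ passedUnder c w x b := by
  obtain ⟨b₂, hne, hpos⟩ := hw.exists_partner b
  refine isWarpingCrossing_iff_of_time_lt x hpos ?_
  rw [time_self]
  exact Nat.pos_of_ne_zero fun h => hne (time_injective b (h.trans (time_self b).symm)).symm

lemma isWarpingCrossing_next_self_iff (hw : IsGaussWord c w) (x : Fin c → Bool) (b : Fin (2*c)) :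
    IsWarpingCrossing c w x (next b) (w b) ↔ ¬ passedUnder c w x b := by
  obtain ⟨b₂, hne, hpos⟩ := hw.exists_partner b
  rw [← passedUnder_partner_iff x hne hpos]
  have hpos₂ : ∀ k, w k = w b ↔ k = b₂ ∨ k = b := fun k => (hpos k).trans or_comm
  refine isWarpingCrossing_iff_of_time_lt x hpos₂ ?_
  have := time_next_add_one hne.symm
  have := time_lt b b₂
  rw [time_next_self]
  omega

lemma isWarpingCrossing_next_iff_of_ne (hw : IsGaussWord c w) (x : Fin c → Bool)
    (b : Fin (2*c)) {i : Fin c} (hi : i ≠ w b) :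
    IsWarpingCrossing c w x (next b) i ↔ IsWarpingCrossing c w x b i := by
  obtain ⟨a, a', hne, hpos⟩ := hw.exists_positions i
  have ha : a ≠ b := by rintro rfl; exact hi ((hpos a).mpr (Or.inl rfl)).symm
  have ha' : a' ≠ b := by rintro rfl; exact hi ((hpos a').mpr (Or.inr rfl)).symm
  have := time_next_add_one ha
  have := time_next_add_one ha'
  rcases lt_or_gt_of_ne ((time_injective b).ne hne) with hlt | hlt
  · rw [isWarpingCrossing_iff_of_time_lt x hpos hlt,
      isWarpingCrossing_iff_of_time_lt x hpos (by omega)]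
  · have hpos' : ∀ k, w k = i ↔ k = a' ∨ k = a := fun k => (hpos k).trans or_comm
    rw [isWarpingCrossing_iff_of_time_lt x hpos' hlt,
      isWarpingCrossing_iff_of_time_lt x hpos' (by omega)]

theorem step_eq_ite (hw : IsGaussWord c w) (x : Fin c → Bool) (b : Fin (2*c)) :
    step c w x b = if passedUnder c w x b then -1 else 1 := by
  rw [step, warpingDegree, warpingDegree,
    Finset.card_filter_sub_card_filter_of_forall_ne _ _ (w b)
      (fun _ hi => isWarpingCrossing_next_iff_of_ne hw x b hi),
    isWarpingCrossing_next_self_iff hw, isWarpingCrossing_self_iff hw]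
  by_cases hb : passedUnder c w x b <;> simp [hb]

lemma exists_passedUnder_passedUnder {j j' : Fin (2*c)} (hne : w j ≠ w j') :
    ∃ x : Fin c → Bool, passedUnder c w x j ∧ passedUnder c w x j' :=
  ⟨fun i => decide (isFirst c w (if i = w j then j else j')), by simp [passedUnder],
    by simp [passedUnder, Ne.symm hne]⟩

/-- If two columns of the ±1 step matrix sum to the zero column, then the two positions
carry the same letter; hence the pairing of columns of the step matrix into pairs summing
to zero coincides with the pairing of positions given by the letters of the Gauss word. -/
theorem eq_letter_of_step_eq_neg (c : ℕ) (w : Fin (2*c) → Fin c) (hw : IsGaussWord c w)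
    (j j' : Fin (2*c)) (h : ∀ x : Fin c → Bool, step c w x j = - step c w x j') :
    w j = w j' := by
  by_contra hne
  obtain ⟨x, hj, hj'⟩ := exists_passedUnder_passedUnder hne
  have hstep := h x
  rw [step_eq_ite hw, step_eq_ite hw, if_pos hj, if_pos hj'] at hstep
  norm_num at hstep

end Warping
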